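/- Let k ≥ 1 be an integer, let r ∈ (0,1) with r ≠ 1/2, and let G₀, G₁, …, G_k be independent Exp(1)-distributed random variables. For ρ > 1 define P_k(ρ) = P{ Σ_{i=1}^{k} log₂( 1 + (ρ/2)(3G₀ + G_i) + (ρ²/2)G₀² ) < 2k·r·log₂ ρ }. Then lim_{ρ→∞} ln P_k(ρ) / ln ρ = −( (1−r) + k·(1−2r)^+ ), where (x)^+ = max(x,0). -/

import Mathlib

/-!
Write `d = (1 - r) + k (1 - 2r)⁺`. The outage event contains the box where `G₀ ≍ ρ^{r-1}` and
every `Gᵢ ≍ ρ^{-(1-2r)⁺}`, since there each summand stays below `log₂ ρ^{2r}`; by independence,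
and because an Exp(1) variable lies in `(t/3, t/2]` with probability at least `t/12`, the box has
probability `≳ ρ^{-d}`. Conversely, outage forces `(ρ G₀)² / 2 < ρ^{2r}`, i.e. `G₀ < 2ρ^{r-1}`,
which is already the bound `ρ^{-d}` when `r > 1/2`. When `r < 1/2` it also forces
`Σᵢ log₂ (1 + ρ Gᵢ / 2) < 2kr log₂ ρ`; rounding these logarithms down to integers `vᵢ` covers
that region by `O((log ρ)^k)` boxes `{G₀ < 2ρ^{r-1}, Gᵢ < (4/ρ) 2^{vᵢ}}` with
`Σ vᵢ ≤ 2kr log₂ ρ`, each of probability `≲ ρ^{-d}`. Constant and logarithmic factors do not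
affect `ln P / ln ρ`.
-/

open MeasureTheory ProbabilityTheory Filter

/-- An Exp(1)-distributed random variable: P{X > t} = e^{−t} for all t ≥ 0. -/
def IsExp1 {Ω : Type*} [MeasurableSpace Ω] (μ : Measure Ω) (X : Ω → ℝ) : Prop :=
  Measurable X ∧ ∀ t : ℝ, 0 ≤ t → μ {ω | t < X ω} = ENNReal.ofReal (Real.exp (-t))

open Real Set Finset

namespace IsExp1

variable {Ω : Type*} [MeasurableSpace Ω] {μ : Measure Ω} [IsProbabilityMeasure μ]
  {X : Ω → ℝ}

lemma measure_le_eq (hX : IsExp1 μ X) {t : ℝ} (ht : 0 ≤ t) :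
    μ {ω | X ω ≤ t} = ENNReal.ofReal (1 - exp (-t)) := by
  have hcompl : {ω | X ω ≤ t} = {ω | t < X ω}ᶜ := by ext; simp
  rw [hcompl, prob_compl_eq_one_sub (s := {ω | t < X ω}) (hX.1 measurableSet_Ioi), hX.2 t ht,
    ENNReal.ofReal_sub _ (exp_nonneg _), ENNReal.ofReal_one]

lemma ae_pos (hX : IsExp1 μ X) : ∀ᵐ ω ∂μ, 0 < X ω := by
  rw [ae_iff]
  simpa using hX.measure_le_eq le_rfl

lemma measure_lt_le (hX : IsExp1 μ X) {t : ℝ} (ht : 0 ≤ t) :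
    μ (X ⁻¹' Iio t) ≤ ENNReal.ofReal t :=
  calc μ (X ⁻¹' Iio t) ≤ μ {ω | X ω ≤ t} :=
        measure_mono fun ω (hω : X ω < t) => hω.le
    _ = ENNReal.ofReal (1 - exp (-t)) := hX.measure_le_eq ht
    _ ≤ ENNReal.ofReal t := ENNReal.ofReal_le_ofReal (by linarith [add_one_le_exp (-t)])

lemma ofReal_div_twelve_le_measure_Ioc (hX : IsExp1 μ X) {t : ℝ} (ht0 : 0 < t) (ht1 : t ≤ 1) :
    ENNReal.ofReal (t / 12) ≤ μ (X ⁻¹' Ioc (t / 3) (t / 2)) := by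
  have hdiff : X ⁻¹' Ioc (t / 3) (t / 2) = {ω | t / 3 < X ω} \ {ω | t / 2 < X ω} := by
    ext; simp
  have hsub : {ω | t / 2 < X ω} ⊆ {ω | t / 3 < X ω} := fun ω (hω : t / 2 < X ω) =>
    show t / 3 < X ω by linarith
  rw [hdiff, measure_sdiff hsub (hX.1 measurableSet_Ioi).nullMeasurableSet (measure_ne_top μ _),
    hX.2 _ (by positivity), hX.2 _ (by positivity), ← ENNReal.ofReal_sub _ (exp_nonneg _)]
  refine ENNReal.ofReal_le_ofReal ?_
  have hfactor : exp (-(t / 3)) - exp (-(t / 2)) = exp (-(t / 2)) * (exp (t / 6) - 1) := by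
    rw [mul_sub, ← exp_add]; ring_nf
  have h1 : t / 6 ≤ exp (t / 6) - 1 := by linarith [add_one_le_exp (t / 6)]
  have h2 : 1 / 2 ≤ exp (-(t / 2)) := by linarith [add_one_le_exp (-(t / 2))]
  rw [hfactor]
  nlinarith

end IsExp1

section Independent

variable {Ω ι : Type*} [MeasurableSpace Ω] {μ : Measure Ω} [IsProbabilityMeasure μ]
  [Fintype ι] {G : ι → Ω → ℝ}

lemma measure_iInter_lt_le (hG : ∀ j, IsExp1 μ (G j)) (hind : iIndepFun G μ) {c : ι → ℝ}
    (hc : ∀ j, 0 ≤ c j) : μ (⋂ j, G j ⁻¹' Iio (c j)) ≤ ENNReal.ofReal (∏ j, c j) := by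
  have hprod := hind.measure_inter_preimage_eq_mul univ (sets := fun j => Iio (c j))
    fun j _ => measurableSet_Iio
  simp only [Finset.mem_univ, iInter_true] at hprod
  rw [hprod, ENNReal.ofReal_prod_of_nonneg fun j _ => hc j]
  exact prod_le_prod' fun j _ => (hG j).measure_lt_le (hc j)

lemma ofReal_prod_le_measure_iInter_Ioc (hG : ∀ j, IsExp1 μ (G j)) (hind : iIndepFun G μ)
    {t : ι → ℝ} (ht : ∀ j, 0 < t j ∧ t j ≤ 1) :
    ENNReal.ofReal (∏ j, t j / 12) ≤ μ (⋂ j, G j ⁻¹' Ioc (t j / 3) (t j / 2)) := by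
  have hprod := hind.measure_inter_preimage_eq_mul univ
    (sets := fun j => Ioc (t j / 3) (t j / 2)) fun j _ => measurableSet_Ioc
  simp only [Finset.mem_univ, iInter_true] at hprod
  rw [hprod, ENNReal.ofReal_prod_of_nonneg fun j _ => by linarith [(ht j).1]]
  exact prod_le_prod' fun j _ => (hG j).ofReal_div_twelve_le_measure_Ioc (ht j).1 (ht j).2

end Independent

noncomputable def idfRate (k : ℕ) (ρ : ℝ) (g : Fin (k + 1) → ℝ) : ℝ :=
  ∑ i : Fin k, logb 2 (1 + (ρ / 2) * (3 * g 0 + g i.succ) + (ρ ^ 2 / 2) * g 0 ^ 2)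

def idfOutage {Ω : Type*} (k : ℕ) (r ρ : ℝ) (G : Fin (k + 1) → Ω → ℝ) : Set Ω :=
  {ω | idfRate k ρ (fun j => G j ω) < 2 * k * r * logb 2 ρ}

lemma mem_idfOutage {Ω : Type*} {k : ℕ} {r ρ : ℝ} {G : Fin (k + 1) → Ω → ℝ} {ω : Ω} :
    ω ∈ idfOutage k r ρ G ↔ idfRate k ρ (fun j => G j ω) < 2 * k * r * logb 2 ρ :=
  Iff.rfl

lemma mul_logb_rpow_sq {ρ : ℝ} (hρ : 0 < ρ) (c r : ℝ) :
    c * logb 2 ((ρ ^ r) ^ 2) = 2 * c * r * logb 2 ρ := by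
  rw [← rpow_natCast, ← rpow_mul hρ.le, logb_rpow_eq_mul_logb_of_pos hρ]
  push_cast
  ring

section Rate

variable {k : ℕ} {ρ x : ℝ} {g : Fin (k + 1) → ℝ}

lemma idfRate_lt_mul_logb_sq (hk : 1 ≤ k) (hρ : 0 ≤ ρ) (hx : 2 < x) (hg : ∀ j, 0 ≤ g j)
    (hg0 : ρ * g 0 ≤ x / 2) (hgs : ∀ i : Fin k, ρ * g i.succ ≤ x ^ 2 / 2) :
    idfRate k ρ g < k * logb 2 (x ^ 2) := by
  have hterm : ∀ i : Fin k,
      logb 2 (1 + (ρ / 2) * (3 * g 0 + g i.succ) + (ρ ^ 2 / 2) * g 0 ^ 2) < logb 2 (x ^ 2) := by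
    intro i
    have h0 := mul_nonneg hρ (hg 0)
    have hi := mul_nonneg hρ (hg i.succ)
    have hsq : (ρ * g 0) ^ 2 ≤ (x / 2) ^ 2 := pow_le_pow_left₀ h0 hg0 2
    refine logb_lt_logb one_lt_two (by nlinarith) ?_
    nlinarith [hgs i]
  have hne : (univ : Finset (Fin k)).Nonempty := univ_nonempty_iff.2 ⟨⟨0, hk⟩⟩
  calc idfRate k ρ g < ∑ _i : Fin k, logb 2 (x ^ 2) :=
        sum_lt_sum_of_nonempty hne fun i _ => hterm i
    _ = k * logb 2 (x ^ 2) := by simp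

lemma mul_lt_of_idfRate_lt (hk : 1 ≤ k) (hρ : 0 ≤ ρ) (hx : 0 < x) (hg : ∀ j, 0 ≤ g j)
    (h : idfRate k ρ g < k * logb 2 (x ^ 2)) : ρ * g 0 < 2 * x := by
  have hterm : ∀ i ∈ (univ : Finset (Fin k)), logb 2 (1 + (ρ * g 0) ^ 2 / 2) ≤
      logb 2 (1 + (ρ / 2) * (3 * g 0 + g i.succ) + (ρ ^ 2 / 2) * g 0 ^ 2) := by
    intro i _
    have := mul_nonneg hρ (add_nonneg (mul_nonneg zero_le_three (hg 0)) (hg i.succ))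
    exact logb_le_logb_of_le one_lt_two (by positivity) (by nlinarith)
  have hsum := card_nsmul_le_sum _ _ _ hterm
  rw [card_univ, Fintype.card_fin, nsmul_eq_mul] at hsum
  have hk' : (0 : ℝ) < k := by exact_mod_cast hk
  have hlt : 1 + (ρ * g 0) ^ 2 / 2 < x ^ 2 :=
    (logb_lt_logb_iff one_lt_two (by positivity) (by positivity)).1
      (lt_of_mul_lt_mul_left (hsum.trans_lt h) hk'.le)
  nlinarith [mul_nonneg hρ (hg 0)]

lemma sum_logb_le_idfRate (hρ : 0 ≤ ρ) (hg : ∀ j, 0 ≤ g j) :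
    ∑ i : Fin k, logb 2 (1 + ρ / 2 * g i.succ) ≤ idfRate k ρ g := by
  refine sum_le_sum fun i _ => ?_
  have := mul_nonneg hρ (hg i.succ)
  exact logb_le_logb_of_le one_lt_two (by linarith)
    (by nlinarith [mul_nonneg hρ (hg 0), sq_nonneg (ρ * g 0)])

end Rate

lemma exists_grid_of_sum_lt {k : ℕ} {y : Fin k → ℝ} {C : ℝ} (hy : ∀ i, 0 ≤ y i)
    (hC : ∑ i, y i < C) :
    ∃ v : Fin k → Fin (⌊C⌋₊ + 1), ∑ i, (v i : ℝ) ≤ C ∧ ∀ i, y i < v i + 1 := by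
  have hyC : ∀ i, y i < C := fun i =>
    (single_le_sum (fun j _ => hy j) (Finset.mem_univ i)).trans_lt hC
  refine ⟨fun i => ⟨⌊y i⌋₊, Nat.lt_succ_of_le (Nat.floor_le_floor (hyC i).le)⟩, ?_,
    fun i => Nat.lt_floor_add_one (y i)⟩
  exact (sum_le_sum fun i _ => Nat.floor_le (hy i)).trans hC.le

section Grid

variable {Ω : Type*} [MeasurableSpace Ω] {μ : Measure Ω} [IsProbabilityMeasure μ] {k : ℕ}
  {G : Fin (k + 1) → Ω → ℝ}

lemma measure_lt_and_sum_logb_lt_le (hG : ∀ j, IsExp1 μ (G j)) (hind : iIndepFun G μ)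
    {a s C : ℝ} (ha : 0 < a) (hs : 0 ≤ s) (hC : 0 ≤ C) :
    μ {ω | G 0 ω < s ∧ ∑ i : Fin k, logb 2 (1 + a * G i.succ ω) < C} ≤
      ENNReal.ofReal ((C + 1) ^ k * (s * (2 / a) ^ k * 2 ^ C)) := by
  set F := univ.filter fun v : Fin k → Fin (⌊C⌋₊ + 1) => ∑ i, (v i : ℝ) ≤ C
  -- `log₂ (1 + a Gᵢ) < vᵢ + 1` gives `Gᵢ < (2 / a) 2^vᵢ`
  let c : (Fin k → Fin (⌊C⌋₊ + 1)) → Fin (k + 1) → ℝ :=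
    fun v => Fin.cons s fun i => 2 / a * 2 ^ (v i : ℕ)
  have hc : ∀ v j, 0 ≤ c v j := by
    intro v j
    cases j using Fin.cases with
    | zero => exact hs
    | succ i => simp only [c, Fin.cons_succ]; positivity
  have hcover : {ω | G 0 ω < s ∧ ∑ i : Fin k, logb 2 (1 + a * G i.succ ω) < C} ≤ᵐ[μ]
      ⋃ v ∈ F, ⋂ j, G j ⁻¹' Iio (c v j) := by
    filter_upwards [ae_all_iff.2 fun j => (hG j).ae_pos] with ω hpos ⟨h0, hsum⟩
    obtain ⟨v, hvC, hv⟩ := exists_grid_of_sum_lt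
      (fun i => logb_nonneg one_lt_two (by nlinarith [hpos i.succ])) hsum
    show ω ∈ ⋃ v ∈ F, _
    simp only [Set.mem_iUnion, Set.mem_iInter, Set.mem_preimage, Set.mem_Iio]
    refine ⟨v, by simpa [F] using hvC, Fin.cases (by simpa [c] using h0) fun i => ?_⟩
    have hi := hv i
    rw [logb_lt_iff_lt_rpow one_lt_two (by nlinarith [hpos i.succ]), rpow_add two_pos, rpow_one,
      rpow_natCast] at hi
    simp only [c, Fin.cons_succ]
    rw [div_mul_eq_mul_div, lt_div_iff₀ ha]
    nlinarith [pow_pos (two_pos (α := ℝ)) (v i : ℕ)]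
  have hcell : ∀ v ∈ F,
      μ (⋂ j, G j ⁻¹' Iio (c v j)) ≤ ENNReal.ofReal (s * (2 / a) ^ k * 2 ^ C) := by
    intro v hv
    refine (measure_iInter_lt_le hG hind (hc v)).trans (ENNReal.ofReal_le_ofReal ?_)
    have hvC : ((∑ i, (v i : ℕ) : ℕ) : ℝ) ≤ C := by simpa [F] using hv
    have h2 : (2 : ℝ) ^ (∑ i, (v i : ℕ)) ≤ 2 ^ C := by
      rw [← rpow_natCast]; exact rpow_le_rpow_of_exponent_le one_le_two hvC
    simp only [Fin.prod_univ_succ, c, Fin.cons_zero, Fin.cons_succ, prod_mul_distrib, prod_const,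
      card_univ, Fintype.card_fin, prod_pow_eq_pow_sum]
    rw [mul_assoc]
    gcongr
  have hcard : (F.card : ℝ) ≤ (C + 1) ^ k :=
    calc (F.card : ℝ) ≤ ((⌊C⌋₊ + 1 : ℕ) : ℝ) ^ k := by
          exact_mod_cast (card_le_univ F).trans_eq (by simp)
      _ ≤ (C + 1) ^ k := by gcongr; push_cast; linarith [Nat.floor_le hC]
  calc μ _ ≤ μ (⋃ v ∈ F, ⋂ j, G j ⁻¹' Iio (c v j)) := measure_mono_ae hcover
    _ ≤ ∑ v ∈ F, μ (⋂ j, G j ⁻¹' Iio (c v j)) := measure_biUnion_finset_le F _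
    _ ≤ F.card • ENNReal.ofReal (s * (2 / a) ^ k * 2 ^ C) := sum_le_card_nsmul F _ _ hcell
    _ ≤ _ := by
      rw [nsmul_eq_mul, ← ENNReal.ofReal_natCast, ← ENNReal.ofReal_mul (by positivity)]
      exact ENNReal.ofReal_le_ofReal (mul_le_mul_of_nonneg_right hcard (by positivity))

end Grid

lemma tendsto_log_div_log_of_rpow_bounds {P : ℝ → ℝ} {d : ℝ}
    (h : ∀ ε > 0, ∀ᶠ ρ in atTop, ρ ^ (d - ε) ≤ P ρ ∧ P ρ ≤ ρ ^ (d + ε)) :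
    Tendsto (fun ρ => log (P ρ) / log ρ) atTop (nhds d) := by
  refine Metric.tendsto_nhds.2 fun ε hε => ?_
  filter_upwards [h (ε / 2) (half_pos hε), eventually_gt_atTop 1] with ρ ⟨hlo, hup⟩ hρ
  have hρ0 : 0 < ρ := one_pos.trans hρ
  have hL : 0 < log ρ := log_pos hρ
  have h1 := log_le_log (rpow_pos_of_pos hρ0 _) hlo
  have h2 := log_le_log ((rpow_pos_of_pos hρ0 _).trans_le hlo) hup
  rw [log_rpow hρ0] at h1 h2
  rw [Real.dist_eq, abs_sub_lt_iff, sub_lt_iff_lt_add', sub_lt_comm, div_lt_iff₀ hL,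
    lt_div_iff₀ hL]
  constructor <;> nlinarith

lemma eventually_mul_log_pow_mul_rpow_le (A : ℝ) {B : ℝ} (hB : 0 ≤ B) (n : ℕ) (a : ℝ)
    {ε : ℝ} (hε : 0 < ε) : ∀ᶠ ρ in atTop, A * (B * log ρ + 1) ^ n * ρ ^ a ≤ ρ ^ (a + ε) := by
  set K := |A| * (B + 1) ^ n + 1
  have hK : 0 < K := by positivity
  filter_upwards [(isLittleO_log_rpow_rpow_atTop (n : ℝ) hε).bound (inv_pos.2 hK),
    eventually_ge_atTop (exp 1)] with ρ hlittle hρ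
  have hρ0 : 0 < ρ := (exp_pos 1).trans_le hρ
  have hL : 1 ≤ log ρ := (le_log_iff_exp_le hρ0).2 hρ
  rw [rpow_natCast, norm_of_nonneg (by positivity), norm_of_nonneg (by positivity),
    inv_mul_eq_div, le_div_iff₀ hK] at hlittle
  have hbase : A * (B * log ρ + 1) ^ n ≤ K * log ρ ^ n :=
    calc A * (B * log ρ + 1) ^ n ≤ |A| * ((B + 1) * log ρ) ^ n := by
          gcongr
          · exact le_abs_self A
          · nlinarith
      _ ≤ K * log ρ ^ n := by rw [mul_pow, ← mul_assoc]; gcongr; linarith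
  rw [rpow_add hρ0, mul_comm (ρ ^ a)]
  exact mul_le_mul_of_nonneg_right (hbase.trans (by linarith)) (by positivity)

section Outage

variable {Ω : Type*} [MeasurableSpace Ω] {μ : Measure Ω} [IsProbabilityMeasure μ] {k : ℕ}
  {r : ℝ} {G : Fin (k + 1) → Ω → ℝ}

lemma const_mul_rpow_le_measure_idfOutage (hk : 1 ≤ k) (hr0 : 0 < r) (hr1 : r < 1)
    (hG : ∀ j, IsExp1 μ (G j)) (hind : iIndepFun G μ) :
    ∀ᶠ ρ in atTop,
      ENNReal.ofReal ((1 / 12) ^ (k + 1) * ρ ^ (-((1 - r) + k * max (1 - 2 * r) 0))) ≤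
        μ (idfOutage k r ρ G) := by
  set b := max (1 - 2 * r) 0
  filter_upwards [eventually_gt_atTop 1, (tendsto_rpow_atTop hr0).eventually_gt_atTop 2]
    with ρ hρ hx
  have hρ0 : 0 < ρ := one_pos.trans hρ
  set t : Fin (k + 1) → ℝ := Fin.cons (ρ ^ (r - 1)) fun _ => ρ ^ (-b)
  have ht : ∀ j, 0 < t j ∧ t j ≤ 1 := by
    intro j
    cases j using Fin.cases with
    | zero =>
      exact ⟨rpow_pos_of_pos hρ0 _, rpow_le_one_of_one_le_of_nonpos hρ.le (by linarith)⟩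
    | succ i =>
      exact ⟨rpow_pos_of_pos hρ0 _,
        rpow_le_one_of_one_le_of_nonpos hρ.le (neg_nonpos.2 (le_max_right _ _))⟩
  have hprod : ∏ j, t j / 12 = (1 / 12) ^ (k + 1) * ρ ^ (-((1 - r) + k * b)) := by
    simp only [Fin.prod_univ_succ, t, Fin.cons_zero, Fin.cons_succ, prod_const, card_univ,
      Fintype.card_fin]
    rw [show -((1 - r) + k * b) = (r - 1) + -b * k by ring, rpow_add hρ0,
      rpow_mul_natCast hρ0.le]
    ring
  have hsucc : ρ * ρ ^ (-b) ≤ (ρ ^ r) ^ 2 :=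
    calc ρ * ρ ^ (-b) ≤ ρ * ρ ^ (2 * r - 1) :=
          mul_le_mul_of_nonneg_left
            (rpow_le_rpow_of_exponent_le hρ.le (by linarith [le_max_left (1 - 2 * r) 0])) hρ0.le
      _ = (ρ ^ r) ^ 2 := by
          rw [rpow_sub_one hρ0.ne', mul_div_cancel₀ _ hρ0.ne', ← rpow_mul_natCast hρ0.le]
          ring_nf
  have hbox : ⋂ j, G j ⁻¹' Ioc (t j / 3) (t j / 2) ⊆ idfOutage k r ρ G := by
    intro ω hω
    simp only [Set.mem_iInter, Set.mem_preimage, Set.mem_Ioc] at hω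
    have h0 : G 0 ω ≤ ρ ^ (r - 1) / 2 := by simpa [t] using (hω 0).2
    rw [mem_idfOutage, ← mul_logb_rpow_sq hρ0]
    refine idfRate_lt_mul_logb_sq hk hρ0.le hx (fun j => ?_) ?_ fun i => ?_
    · linarith [(hω j).1, (ht j).1]
    · calc ρ * G 0 ω ≤ ρ * (ρ ^ (r - 1) / 2) := by gcongr
        _ = ρ ^ r / 2 := by rw [rpow_sub_one hρ0.ne']; field_simp
    · have hi : G i.succ ω ≤ ρ ^ (-b) / 2 := by simpa [t] using (hω i.succ).2
      calc ρ * G i.succ ω ≤ ρ * (ρ ^ (-b) / 2) := by gcongr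
        _ ≤ (ρ ^ r) ^ 2 / 2 := by linarith
  calc ENNReal.ofReal ((1 / 12) ^ (k + 1) * ρ ^ (-((1 - r) + k * b)))
      = ENNReal.ofReal (∏ j, t j / 12) := by rw [hprod]
    _ ≤ μ (⋂ j, G j ⁻¹' Ioc (t j / 3) (t j / 2)) :=
        ofReal_prod_le_measure_iInter_Ioc hG hind ht
    _ ≤ _ := measure_mono hbox

lemma idfOutage_ae_le (hk : 1 ≤ k) (hG : ∀ j, IsExp1 μ (G j)) {ρ : ℝ} (hρ : 0 < ρ) :
    idfOutage k r ρ G ≤ᵐ[μ]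
      {ω | G 0 ω < 2 * ρ ^ (r - 1) ∧
        ∑ i : Fin k, logb 2 (1 + ρ / 2 * G i.succ ω) < 2 * k * r * logb 2 ρ} := by
  filter_upwards [ae_all_iff.2 fun j => (hG j).ae_pos] with ω hpos
    (hω : ω ∈ idfOutage k r ρ G)
  rw [mem_idfOutage] at hω
  have hnn : ∀ j, 0 ≤ G j ω := fun j => (hpos j).le
  refine ⟨?_, (sum_logb_le_idfRate hρ.le hnn).trans_lt hω⟩
  rw [← mul_logb_rpow_sq hρ] at hω
  have h0 := mul_lt_of_idfRate_lt hk hρ.le (rpow_pos_of_pos hρ r) hnn hω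
  rw [rpow_sub_one hρ.ne', ← mul_div_assoc, lt_div_iff₀ hρ]
  linarith

lemma measure_idfOutage_le_two_mul_rpow (hk : 1 ≤ k) (hG : ∀ j, IsExp1 μ (G j)) :
    ∀ᶠ ρ in atTop, μ (idfOutage k r ρ G) ≤ ENNReal.ofReal (2 * ρ ^ (r - 1)) := by
  filter_upwards [eventually_gt_atTop 0] with ρ hρ
  calc μ _ ≤ μ (G 0 ⁻¹' Iio (2 * ρ ^ (r - 1))) :=
        measure_mono_ae ((idfOutage_ae_le hk hG hρ).mono fun ω h hω => (h hω).1)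
    _ ≤ _ := (hG 0).measure_lt_le (by positivity)

lemma measure_idfOutage_le_log_pow_mul_rpow (hk : 1 ≤ k) (hr : 0 ≤ r)
    (hG : ∀ j, IsExp1 μ (G j)) (hind : iIndepFun G μ) :
    ∀ᶠ ρ in atTop, μ (idfOutage k r ρ G) ≤
      ENNReal.ofReal
        (2 * 4 ^ k * (2 * k * r / log 2 * log ρ + 1) ^ k * ρ ^ (r - 1 - k * (1 - 2 * r))) := by
  filter_upwards [eventually_gt_atTop 1] with ρ hρ
  have hρ0 : 0 < ρ := one_pos.trans hρ
  have hC : 0 ≤ 2 * k * r * logb 2 ρ := by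
    have := logb_nonneg one_lt_two hρ.le
    positivity
  refine (measure_mono_ae (idfOutage_ae_le hk hG hρ0)).trans
    ((measure_lt_and_sum_logb_lt_le hG hind (by positivity) (by positivity) hC).trans_eq ?_)
  have h2C : (2 : ℝ) ^ (2 * k * r * logb 2 ρ) = ρ ^ (2 * k * r) := by
    rw [mul_comm, rpow_mul zero_le_two, rpow_logb two_pos one_lt_two.ne' hρ0]
  have hCeq : 2 * k * r * logb 2 ρ = 2 * k * r / log 2 * log ρ := by rw [logb]; ring
  rw [h2C, hCeq, show r - 1 - k * (1 - 2 * r) = (r - 1) + 2 * k * r - (k : ℕ) by ring,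
    rpow_sub hρ0 _ (k : ℕ), rpow_add hρ0 (r - 1), rpow_natCast,
    show 2 / (ρ / 2) = 4 / ρ by ring, div_pow]
  congr 1
  field_simp

lemma rpow_sub_le_measure_idfOutage (hk : 1 ≤ k) (hr0 : 0 < r) (hr1 : r < 1)
    (hG : ∀ j, IsExp1 μ (G j)) (hind : iIndepFun G μ) {ε : ℝ} (hε : 0 < ε) :
    ∀ᶠ ρ in atTop, ENNReal.ofReal (ρ ^ (-((1 - r) + k * max (1 - 2 * r) 0) - ε)) ≤
      μ (idfOutage k r ρ G) := by
  set d := -((1 - r) + k * max (1 - 2 * r) 0)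
  filter_upwards [const_mul_rpow_le_measure_idfOutage hk hr0 hr1 hG hind,
    eventually_mul_log_pow_mul_rpow_le (12 ^ (k + 1)) le_rfl 0 (d - ε) hε] with ρ hlo habs
  rw [pow_zero, mul_one, sub_add_cancel] at habs
  refine le_trans (ENNReal.ofReal_le_ofReal ?_) hlo
  calc ρ ^ (d - ε) = (1 / 12) ^ (k + 1) * (12 ^ (k + 1) * ρ ^ (d - ε)) := by
        rw [← mul_assoc, ← mul_pow]; norm_num
    _ ≤ (1 / 12) ^ (k + 1) * ρ ^ d := by gcongr

lemma measure_idfOutage_le_rpow_add (hk : 1 ≤ k) (hr0 : 0 < r) (hr2 : r ≠ 1 / 2)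
    (hG : ∀ j, IsExp1 μ (G j)) (hind : iIndepFun G μ) {ε : ℝ} (hε : 0 < ε) :
    ∀ᶠ ρ in atTop, μ (idfOutage k r ρ G) ≤
      ENNReal.ofReal (ρ ^ (-((1 - r) + k * max (1 - 2 * r) 0) + ε)) := by
  rcases hr2.lt_or_gt with hr | hr
  · have hd : -((1 - r) + k * max (1 - 2 * r) 0) = r - 1 - k * (1 - 2 * r) := by
      rw [max_eq_left (by linarith)]; ring
    rw [hd]
    filter_upwards [measure_idfOutage_le_log_pow_mul_rpow hk hr0.le hG hind,
      eventually_mul_log_pow_mul_rpow_le (2 * 4 ^ k) (B := 2 * k * r / log 2) (by positivity) k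
        (r - 1 - k * (1 - 2 * r)) hε] with ρ h habs
    exact h.trans (ENNReal.ofReal_le_ofReal habs)
  · have hd : -((1 - r) + k * max (1 - 2 * r) 0) = r - 1 := by
      rw [max_eq_right (by linarith)]; ring
    rw [hd]
    filter_upwards [measure_idfOutage_le_two_mul_rpow hk hG,
      eventually_mul_log_pow_mul_rpow_le 2 le_rfl 0 (r - 1) hε] with ρ h habs
    rw [pow_zero, mul_one] at habs
    exact h.trans (ENNReal.ofReal_le_ofReal habs)

end Outage

/-- diversity exponent of the outage probability of the Incomplete DF
scheme with k decoding relays: with G₀, G₁, …, G_k i.i.d. Exp(1) (G₀ indexed by 0 and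
Gᵢ by i.succ), Pₖ(ρ) = P{Σᵢ₌₁ᵏ log₂(1 + (ρ/2)(3G₀+Gᵢ) + (ρ²/2)G₀²) < 2kr·log₂ ρ}
satisfies lim_{ρ→∞} ln Pₖ(ρ)/ln ρ = −((1−r) + k(1−2r)⁺). -/
theorem incomplete_df_k_relays_exponent {Ω : Type*} [MeasurableSpace Ω]
    (μ : Measure Ω) [IsProbabilityMeasure μ]
    (k : ℕ) (hk : 1 ≤ k) (r : ℝ) (hr0 : 0 < r) (hr1 : r < 1) (hr2 : r ≠ 1 / 2)
    (G : Fin (k + 1) → Ω → ℝ) (hG : ∀ i, IsExp1 μ (G i))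
    (hindep : iIndepFun G μ) :
    Tendsto (fun ρ : ℝ =>
        Real.log
          ((μ {ω | (∑ i : Fin k, Real.logb 2
              (1 + (ρ / 2) * (3 * G 0 ω + G i.succ ω) + (ρ ^ 2 / 2) * (G 0 ω) ^ 2)) <
            2 * (k : ℝ) * r * Real.logb 2 ρ}).toReal)
          / Real.log ρ)
      atTop (nhds (-((1 - r) + (k : ℝ) * max (1 - 2 * r) 0))) := by
  refine tendsto_log_div_log_of_rpow_bounds fun ε hε => ?_
  filter_upwards [rpow_sub_le_measure_idfOutage hk hr0 hr1 hG hindep hε,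
    measure_idfOutage_le_rpow_add hk hr0 hr2 hG hindep hε,
    eventually_ge_atTop 0] with ρ hlo hup hρ
  exact ⟨(ENNReal.ofReal_le_iff_le_toReal (measure_ne_top _ _)).1 hlo,
    ENNReal.toReal_le_of_le_ofReal (rpow_nonneg hρ _) hup⟩
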